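/- arXiv:2404.19662 — 3 statements merged into one kernel-verified Lean document; each statement's English description precedes it below -/
import Mathlib

section
/- For every positive integer p, the sum over l from 0 to p of binom(2p, 2l) * C_l * C_{p-l} equals C_p * C_{p+1}, where C_k denotes the k-th Catalan number. -/
/-!
Writing everything in factorials, `binom(2p, 2l) C_l C_{p-l} (p + 2) = C_p binom(p, l) binom(p + 2, l + 1)`.
Summing over `l`, Vandermonde's identity turns the right side into
`C_p binom(2p + 2, p + 1) = C_p C_{p+1} (p + 2)`.
-/

open Nat Finset Finset.Nat

theorem catalan_mul_factorial_mul_factorial_succ (n : ℕ) :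
    catalan n * n ! * (n + 1)! = (2 * n)! := by
  rw [factorial_succ, two_mul, ← add_choose_mul_factorial_mul_factorial n n, ← two_mul,
    ← centralBinom_eq_two_mul_choose, ← succ_mul_catalan_eq_centralBinom]
  ring

theorem choose_two_mul_mul_catalan_mul_catalan (a b : ℕ) :
    (2 * (a + b)).choose (2 * a) * catalan a * catalan b * (a + b + 2)
      = catalan (a + b) * ((a + b).choose a * (a + b + 2).choose (b + 1)) := by
  have hl : (2 * (a + b)).choose (2 * a) * (2 * b)! * (2 * a)! = (2 * (a + b))! := by
    simpa only [mul_add, add_comm (2 * b)] using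
      add_choose_mul_factorial_mul_factorial (2 * b) (2 * a)
  have hm : (a + b).choose a * b ! * a ! = (a + b)! := by
    simpa only [add_comm b] using add_choose_mul_factorial_mul_factorial b a
  have hr : (a + b + 2).choose (b + 1) * (a + 1)! * (b + 1)! = (a + b + 2) * (a + b + 1)! := by
    rw [← factorial_succ, show a + b + 2 = a + 1 + (b + 1) by ring]
    exact add_choose_mul_factorial_mul_factorial (a + 1) (b + 1)
  rw [← catalan_mul_factorial_mul_factorial_succ, ← catalan_mul_factorial_mul_factorial_succ,
    ← catalan_mul_factorial_mul_factorial_succ, ← hm] at hl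
  -- after multiplying by `a! (a+1)! b! (b+1)!`, both sides equal `(2(a+b))! (a+b+2)`
  refine Nat.eq_of_mul_eq_mul_right (by positivity : 0 < a ! * (a + 1)! * (b ! * (b + 1)!)) ?_
  linear_combination (a + b + 2) * hl - catalan (a + b) * (a + b).choose a * b ! * a ! * hr

theorem sum_antidiagonal_choose_mul_choose_succ (n m : ℕ) :
    ∑ ij ∈ antidiagonal n, n.choose ij.1 * m.choose (ij.2 + 1) = (n + m).choose (n + 1) := by
  rw [add_choose_eq, sum_antidiagonal_succ', choose_succ_self, zero_mul, zero_add]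

theorem catalan_binom_sum_general (p : ℕ) :
    ∑ l ∈ Finset.range (p + 1),
        Nat.choose (2 * p) (2 * l) * catalan l * catalan (p - l)
      = catalan p * catalan (p + 1) := by
  refine Nat.eq_of_mul_eq_mul_right (by positivity : 0 < p + 2) ?_
  rw [← sum_antidiagonal_eq_sum_range_succ
    (fun a b => (2 * p).choose (2 * a) * catalan a * catalan b)]
  calc (∑ ij ∈ antidiagonal p, (2 * p).choose (2 * ij.1) * catalan ij.1 * catalan ij.2) * (p + 2)
      = catalan p * ∑ ij ∈ antidiagonal p, p.choose ij.1 * (p + 2).choose (ij.2 + 1) := by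
        rw [sum_mul, mul_sum]
        refine sum_congr rfl fun ⟨a, b⟩ hab => ?_
        obtain rfl : a + b = p := HasAntidiagonal.mem_antidiagonal.mp hab
        exact choose_two_mul_mul_catalan_mul_catalan a b
    _ = catalan p * (2 * (p + 1)).choose (p + 1) := by
        rw [sum_antidiagonal_choose_mul_choose_succ, show p + (p + 2) = 2 * (p + 1) by ring]
    _ = catalan p * catalan (p + 1) * (p + 2) := by
        rw [← centralBinom_eq_two_mul_choose, ← succ_mul_catalan_eq_centralBinom]
        ring

theorem catalan_binom_sum (p : ℕ) (hp : 0 < p) :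
    ∑ l ∈ Finset.range (p + 1),
        Nat.choose (2 * p) (2 * l) * catalan l * catalan (p - l)
      = catalan p * catalan (p + 1) :=
  catalan_binom_sum_general p
end

section
/- Let π be a pair partition of [2p] whose intersection graph is bipartite. Then the number of ways to write π as a 'left-right noncrossing representation', i.e. the number of ordered pairs (π_1, π_2) together with a subset I ⊆ [2p] such that π_1 is a noncrossing pair partition of I, π_2 is a noncrossing pair partition of the complement I^c, and π = π_1 ∪ π_2, equals 2^{cc(π)}, where cc(π) is the number of connected components of the intersection graph of π. -/
open Finset

def Crosses {n : ℕ} (V W : Finset (Fin n)) : Prop :=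
  ∃ i k j l : Fin n, i < k ∧ k < j ∧ j < l ∧ i ∈ V ∧ j ∈ V ∧ k ∈ W ∧ l ∈ W

def CrossSym {n : ℕ} (V W : Finset (Fin n)) : Prop := Crosses V W ∨ Crosses W V

def IsPartitionOn {n : ℕ} (S : Finset (Fin n)) (π : Finset (Finset (Fin n))) : Prop :=
  (∀ V ∈ π, V.Nonempty ∧ V ⊆ S) ∧ ∀ i ∈ S, ∃! V, V ∈ π ∧ i ∈ V

def IsPairPartitionOn {n : ℕ} (S : Finset (Fin n)) (π : Finset (Finset (Fin n))) : Prop :=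
  IsPartitionOn S π ∧ ∀ V ∈ π, V.card = 2

def IsPairPartition (n : ℕ) (π : Finset (Finset (Fin n))) : Prop :=
  IsPairPartitionOn Finset.univ π

def NoncrossingPart {n : ℕ} (π : Finset (Finset (Fin n))) : Prop :=
  ∀ V ∈ π, ∀ W ∈ π, V ≠ W → ¬ CrossSym V W

def interGraph {n : ℕ} (π : Finset (Finset (Fin n))) :
    SimpleGraph {V : Finset (Fin n) // V ∈ π} where
  Adj V W := V ≠ W ∧ CrossSym V.1 W.1
  symm := by
    refine ⟨?_⟩
    rintro V W ⟨h1, h2⟩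
    exact ⟨h1.symm, h2.symm⟩
  loopless := by refine ⟨?_⟩; rintro V ⟨h1, _⟩; exact h1 rfl

noncomputable def ccCount {n : ℕ} (π : Finset (Finset (Fin n))) : ℕ :=
  Nat.card (interGraph π).ConnectedComponent

def IsBipartitePart {n : ℕ} (π : Finset (Finset (Fin n))) : Prop :=
  (interGraph π).Colorable 2

def IsConnectedPart {n : ℕ} (π : Finset (Finset (Fin n))) : Prop :=
  (interGraph π).Connected

open scoped Classical in
noncomputable def crBlocks {n : ℕ} (π : Finset (Finset (Fin n))) : Finset (Finset (Fin n)) :=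
  π.filter (fun V => ∃ W ∈ π, W ≠ V ∧ CrossSym V W)

open scoped Classical in
noncomputable def ncrBlocks {n : ℕ} (π : Finset (Finset (Fin n))) : Finset (Finset (Fin n)) :=
  π.filter (fun V => ¬ ∃ W ∈ π, W ≠ V ∧ CrossSym V W)

noncomputable def crCount {n : ℕ} (π : Finset (Finset (Fin n))) : ℕ := (crBlocks π).card
noncomputable def ncrCount {n : ℕ} (π : Finset (Finset (Fin n))) : ℕ := (ncrBlocks π).card

open scoped Classical in
noncomputable def compPart {n : ℕ} (π : Finset (Finset (Fin n))) : Finset (Finset (Fin n)) :=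
  π.attach.image fun V => Finset.univ.filter fun i : Fin n =>
    ∃ W, ∃ hW : W ∈ π, i ∈ W ∧ (interGraph π).Reachable V ⟨W, hW⟩

def restrictPart {n : ℕ} (π : Finset (Finset (Fin n))) (T : Finset (Fin n)) :
    Finset (Finset (Fin n)) :=
  π.filter (· ⊆ T)

open scoped Classical in
noncomputable def pairPartitions (n : ℕ) : Finset (Finset (Finset (Fin n))) :=
  Finset.univ.filter (IsPairPartition n)

open scoped Classical in
noncomputable def biPairPartitions (n : ℕ) : Finset (Finset (Finset (Fin n))) :=
  (pairPartitions n).filter IsBipartitePart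

open scoped Classical in
noncomputable def biconPairPartitions (n : ℕ) : Finset (Finset (Finset (Fin n))) :=
  (biPairPartitions n).filter IsConnectedPart

open scoped Classical in
noncomputable def ncPairPartitions (n : ℕ) : Finset (Finset (Finset (Fin n))) :=
  (pairPartitions n).filter NoncrossingPart

open scoped Classical in
noncomputable def ncPartitions (n : ℕ) : Finset (Finset (Finset (Fin n))) :=
  Finset.univ.filter (fun π => IsPartitionOn Finset.univ π ∧ NoncrossingPart π)

def NoncrossingOn {n : ℕ} (π : Finset (Finset (Fin n))) : Prop :=
  ∀ V ∈ π, ∀ W ∈ π, V ≠ W → ¬ CrossSym V W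


/-! A left-right representation is determined by its left family `A ⊆ π`, and colouring each
block by whether it lies in `A` identifies representations with proper 2-colourings of the
intersection graph. Once one proper 2-colouring `c₀` exists, `c ↦ c xor c₀` is constant on
connected components, which identifies proper 2-colourings with functions from components to `Bool`. -/

namespace SimpleGraph

variable {V : Type*} {G : SimpleGraph V}

theorem Coloring.xor_eq_of_reachable (c c₀ : G.Coloring Bool) {u v : V} (h : G.Reachable u v) :
    (c u ^^ c₀ u) = (c v ^^ c₀ v) := by
  obtain ⟨p⟩ := h
  have := (c.even_length_iff_congr p).symm.trans (c₀.even_length_iff_congr p)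
  revert this
  cases c u <;> cases c v <;> cases c₀ u <;> cases c₀ v <;> decide

def Coloring.boolEquivComponentFun (c₀ : G.Coloring Bool) :
    G.Coloring Bool ≃ (G.ConnectedComponent → Bool) where
  toFun c := ConnectedComponent.lift (fun v => c v ^^ c₀ v)
    fun _ _ p _ => c.xor_eq_of_reachable c₀ ⟨p⟩
  invFun f := Coloring.mk (fun v => f (G.connectedComponentMk v) ^^ c₀ v) fun hvw => by
    rw [ConnectedComponent.connectedComponentMk_eq_of_adj hvw, Ne, Bool.xor_right_inj]
    exact c₀.valid hvw
  left_inv c := DFunLike.ext _ _ fun v => by simp [Coloring.mk]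
  right_inv f := funext fun C => C.ind fun v => by simp [Coloring.mk]

theorem card_coloring_bool [Finite G.ConnectedComponent] (h : G.Colorable 2) :
    Nat.card (G.Coloring Bool) = 2 ^ Nat.card G.ConnectedComponent := by
  rw [Nat.card_congr (h.toColoring (by simp)).boolEquivComponentFun, Nat.card_fun,
    Nat.card_eq_fintype_card, Fintype.card_bool]

end SimpleGraph

section Partitions

variable {n : ℕ} {S T I : Finset (Fin n)} {π A B : Finset (Finset (Fin n))}

theorem IsPartitionOn.biUnion_eq (h : IsPartitionOn S π) : π.biUnion id = S := by
  ext i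
  simp only [mem_biUnion, id]
  refine ⟨fun ⟨V, hV, hi⟩ => (h.1 V hV).2 hi, fun hi => ?_⟩
  obtain ⟨V, ⟨hV, hiV⟩, -⟩ := h.2 i hi
  exact ⟨V, hV, hiV⟩

theorem IsPartitionOn.disjoint (hA : IsPartitionOn S A) (hB : IsPartitionOn T B)
    (hST : Disjoint S T) : Disjoint A B := by
  refine disjoint_left.2 fun V hVA hVB => ?_
  obtain ⟨i, hi⟩ := (hA.1 V hVA).1
  exact disjoint_left.1 hST ((hA.1 V hVA).2 hi) ((hB.1 V hVB).2 hi)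

theorem IsPairPartitionOn.subset (hπ : IsPairPartitionOn S π) (hA : A ⊆ π) :
    IsPairPartitionOn (A.biUnion id) A := by
  refine ⟨⟨fun V hV => ⟨(hπ.1.1 V (hA hV)).1, subset_biUnion_of_mem id hV⟩, fun i hi => ?_⟩,
    fun V hV => hπ.2 V (hA hV)⟩
  obtain ⟨V, hV, hiV⟩ := mem_biUnion.1 hi
  obtain ⟨U, -, hU⟩ := hπ.1.2 i ((hπ.1.1 V (hA hV)).2 hiV)
  refine ⟨V, ⟨hV, hiV⟩, fun W ⟨hW, hiW⟩ => ?_⟩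
  rw [hU W ⟨hA hW, hiW⟩, hU V ⟨hA hV, hiV⟩]

theorem IsPartitionOn.biUnion_sdiff (hπ : IsPartitionOn S π) (hA : A ⊆ π) :
    (π \ A).biUnion id = S \ A.biUnion id := by
  ext i
  simp only [mem_biUnion, mem_sdiff, id, not_exists, not_and]
  constructor
  · rintro ⟨W, ⟨hWπ, hWA⟩, hiW⟩
    obtain ⟨U, -, hU⟩ := hπ.2 i ((hπ.1 W hWπ).2 hiW)
    refine ⟨(hπ.1 W hWπ).2 hiW, fun V hVA hiV => hWA ?_⟩
    rwa [hU W ⟨hWπ, hiW⟩, ← hU V ⟨hA hVA, hiV⟩]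
  · rintro ⟨hi, hiA⟩
    obtain ⟨V, ⟨hVπ, hiV⟩, -⟩ := hπ.2 i hi
    exact ⟨V, ⟨hVπ, fun hVA => hiA V hVA hiV⟩, hiV⟩

theorem isPairPartitionOn_split_iff (hπ : IsPairPartition n π) :
    (IsPairPartitionOn I A ∧ IsPairPartitionOn Iᶜ B ∧ π = A ∪ B) ↔
      (A ⊆ π ∧ I = A.biUnion id ∧ B = π \ A) := by
  constructor
  · rintro ⟨hA, hB, rfl⟩
    refine ⟨subset_union_left, hA.1.biUnion_eq.symm, ?_⟩
    rw [union_sdiff_left, sdiff_eq_self_of_disjoint]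
    exact hB.1.disjoint hA.1 disjoint_compl_left
  · rintro ⟨hA, rfl, rfl⟩
    refine ⟨hπ.subset hA, ?_, (union_sdiff_of_subset hA).symm⟩
    rw [compl_eq_univ_sdiff, ← hπ.1.biUnion_sdiff hA]
    exact hπ.subset sdiff_subset

end Partitions

section Representations

variable {n : ℕ} {π F : Finset (Finset (Fin n))}

def IsLeftRightRepresentation (π : Finset (Finset (Fin n)))
    (x : Finset (Fin n) × Finset (Finset (Fin n)) × Finset (Finset (Fin n))) : Prop :=
  IsPairPartitionOn x.1 x.2.1 ∧ NoncrossingOn x.2.1 ∧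
    IsPairPartitionOn x.1ᶜ x.2.2 ∧ NoncrossingOn x.2.2 ∧ π = x.2.1 ∪ x.2.2

def IsNoncrossingSplit (π A : Finset (Finset (Fin n))) : Prop :=
  A ⊆ π ∧ NoncrossingOn A ∧ NoncrossingOn (π \ A)

theorem noncrossingOn_iff_forall_not_adj (hF : F ⊆ π) :
    NoncrossingOn F ↔ ∀ v w : {V // V ∈ π}, v.1 ∈ F → w.1 ∈ F → ¬ (interGraph π).Adj v w := by
  refine ⟨fun h v w hv hw hvw => h _ hv _ hw (Subtype.coe_ne_coe.2 hvw.1) hvw.2,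
    fun h V hV W hW hne hcr => h ⟨V, hF hV⟩ ⟨W, hF hW⟩ hV hW ⟨?_, hcr⟩⟩
  exact fun hVW => hne (congrArg Subtype.val hVW)

def representationEquivSplit (hπ : IsPairPartition n π) :
    {x // IsLeftRightRepresentation π x} ≃ {A // IsNoncrossingSplit π A} where
  toFun x :=
    have h := (isPairPartitionOn_split_iff hπ).1 ⟨x.2.1, x.2.2.2.1, x.2.2.2.2.2⟩
    ⟨x.1.2.1, h.1, x.2.2.1, h.2.2 ▸ x.2.2.2.2.1⟩
  invFun A := ⟨(A.1.biUnion id, A.1, π \ A.1), by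
    obtain ⟨hA, hB, hU⟩ := (isPairPartitionOn_split_iff hπ).2 ⟨A.2.1, rfl, rfl⟩
    exact ⟨hA, A.2.2.1, hB, A.2.2.2, hU⟩⟩
  left_inv := by
    rintro ⟨⟨I, A, B⟩, hA, -, hB, -, hU⟩
    obtain ⟨-, hI, hBA⟩ := (isPairPartitionOn_split_iff hπ).1 ⟨hA, hB, hU⟩
    dsimp only at hI hBA
    subst hI hBA
    rfl
  right_inv _ := rfl

open scoped Classical in
theorem isNoncrossingSplit_filter_coloring (c : (interGraph π).Coloring Bool) :
    IsNoncrossingSplit π (π.filter fun V => ∃ h : V ∈ π, c ⟨V, h⟩ = true) := by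
  have hmem (v : {V // V ∈ π}) : v.1 ∈ π.filter (fun V => ∃ h : V ∈ π, c ⟨V, h⟩ = true) ↔
      c v = true := by
    simp [v.2]
  refine ⟨filter_subset _ _, (noncrossingOn_iff_forall_not_adj (filter_subset _ _)).2 ?_,
    (noncrossingOn_iff_forall_not_adj sdiff_subset).2 ?_⟩
  · intro v w hv hw hvw
    exact c.valid hvw (((hmem v).1 hv).trans ((hmem w).1 hw).symm)
  · intro v w hv hw hvw
    simp only [mem_sdiff, hmem, v.2, w.2, true_and, Bool.not_eq_true] at hv hw
    exact c.valid hvw (hv.trans hw.symm)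

open scoped Classical in
def splitEquivColoring :
    {A // IsNoncrossingSplit π A} ≃ (interGraph π).Coloring Bool where
  toFun A := SimpleGraph.Coloring.mk (fun v => decide (v.1 ∈ A.1)) fun {v w} hvw hc => by
    by_cases hv : v.1 ∈ A.1
    · have hw : w.1 ∈ A.1 := by simpa [hv] using hc
      exact (noncrossingOn_iff_forall_not_adj A.2.1).1 A.2.2.1 v w hv hw hvw
    · have hw : w.1 ∉ A.1 := by simpa [hv] using hc
      exact (noncrossingOn_iff_forall_not_adj sdiff_subset).1 A.2.2.2 v w
        (mem_sdiff.2 ⟨v.2, hv⟩) (mem_sdiff.2 ⟨w.2, hw⟩) hvw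
  invFun c := ⟨_, isNoncrossingSplit_filter_coloring c⟩
  left_inv A := by
    ext V
    simpa [SimpleGraph.Coloring.mk] using @A.2.1 V
  right_inv c := DFunLike.ext _ _ fun v => by simp [SimpleGraph.Coloring.mk]

end Representations

open scoped Classical in
theorem card_left_right_representations (p : ℕ) (π : Finset (Finset (Fin (2 * p))))
    (hπ : IsPairPartition (2 * p) π) (hbi : IsBipartitePart π) :
    (Finset.univ.filter
        (fun x : Finset (Fin (2 * p)) × Finset (Finset (Fin (2 * p))) × Finset (Finset (Fin (2 * p))) =>
          IsPairPartitionOn x.1 x.2.1 ∧ NoncrossingOn x.2.1 ∧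
          IsPairPartitionOn x.1ᶜ x.2.2 ∧ NoncrossingOn x.2.2 ∧
          π = x.2.1 ∪ x.2.2)).card = 2 ^ ccCount π := by
  rw [← Fintype.card_subtype, ← Nat.card_eq_fintype_card]
  calc Nat.card {x // IsLeftRightRepresentation π x}
      = Nat.card {A // IsNoncrossingSplit π A} := Nat.card_congr (representationEquivSplit hπ)
    _ = Nat.card ((interGraph π).Coloring Bool) := Nat.card_congr splitEquivColoring
    _ = 2 ^ ccCount π := SimpleGraph.card_coloring_bool hbi
end

section
/- Let (A, τ) be a noncommutative probability space with faithful tracial state τ, let {a_k} and {d_k} (k ∈ [n]) be two families such that the family of pairs (a_k, d_k) is free across k, and set c_k := a_k ⊗ d_k − τ(a_k)τ(d_k)·1⊗1 in (A⊗A, τ⊗τ). If i_1,…,i_m ∈ [n] and there exists l* ∈ [m] with i_{l*} ≠ i_j for all j ≠ l*, then (τ⊗τ)(c_{i_1} ⋯ c_{i_m}) = 0. -/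
open scoped TensorProduct

structure NCState (A : Type*) [Ring A] [Algebra ℂ A] [StarRing A] where
  τ : A →ₗ[ℂ] ℂ
  map_one : τ 1 = 1
  tracial : ∀ x y : A, τ (x * y) = τ (y * x)
  faithful : ∀ x : A, τ (star x * x) = 0 → x = 0

def FreeFamily {A : Type*} [Ring A] [Algebra ℂ A] (τ : A →ₗ[ℂ] ℂ)
    {ι : Type*} (S : ι → Subalgebra ℂ A) : Prop :=
  ∀ (p : ℕ), 0 < p → ∀ (x : Fin p → A) (j : Fin p → ι),
    (∀ i, x i ∈ S (j i)) → (∀ i, τ (x i) = 0) →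
    (∀ (i : ℕ) (h : i + 1 < p), j ⟨i, by omega⟩ ≠ j ⟨i + 1, h⟩) →
    τ ((List.ofFn x).prod) = 0

noncomputable def tState {A : Type*} [Ring A] [Algebra ℂ A] (τ : A →ₗ[ℂ] ℂ) :
    A ⊗[ℂ] A →ₗ[ℂ] ℂ :=
  (TensorProduct.lid ℂ ℂ).toLinearMap.comp (TensorProduct.map τ τ)

/-!
Write `B k` for the algebra generated by `a k, d k`, fix the singleton index `t = i l` and let
`S` be the algebra generated by the `B k` with `k ≠ t`.
Every element of `S` is a combination of reduced words of centered letters from these `B k`: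
multiplying a letter onto a word either extends it or merges with its first letter, and the
merged letter is recentred. Inserting a centered `b ∈ B t` between two such words gives again a
reduced word, so freeness yields `τ (x * b * y) = τ b * τ (x * y)` for `x, y ∈ S`. Every
`c (i j)` with `j ≠ l` lies in the image of `S ⊗ S`, so the product is `X * c t * Y` with `X, Y`
in that image, and the factorisation in both tensor legs turns `(τ ⊗ τ) (X * (a t ⊗ d t) * Y)`
into `τ (a t) * τ (d t) * (τ ⊗ τ) (X * Y)`, which cancels the scalar part of `c t`.
-/

theorem Submonoid.exists_prod_ofFn_eq_mul_mul {M : Type*} [Monoid M] (S : Submonoid M) {m : ℕ}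
    (f : Fin m → M) (l : Fin m) (hf : ∀ j, j ≠ l → f j ∈ S) :
    ∃ x ∈ S, ∃ y ∈ S, (List.ofFn f).prod = x * f l * y := by
  refine ⟨((List.ofFn f).take l).prod, S.list_prod_mem ?_, ((List.ofFn f).drop (l + 1)).prod,
    S.list_prod_mem ?_, ?_⟩
  · simp only [List.mem_take_iff_getElem, List.getElem_ofFn]
    rintro _ ⟨j, hj, rfl⟩
    exact hf _ (Fin.ne_of_val_ne (by simp; omega))
  · simp only [List.mem_drop_iff_getElem, List.getElem_ofFn]
    rintro _ ⟨j, hj, rfl⟩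
    exact hf _ (Fin.ne_of_val_ne (by simp; omega))
  · rw [← List.prod_take_mul_prod_drop _ l, List.drop_eq_getElem_cons (by simp), List.prod_cons,
      List.getElem_ofFn, mul_assoc]

theorem Subalgebra.tmul_mem_range_map_val {R A : Type*} [CommSemiring R] [Semiring A]
    [Algebra R A] {S : Subalgebra R A} {x y : A} (hx : x ∈ S) (hy : y ∈ S) :
    x ⊗ₜ[R] y ∈ (Algebra.TensorProduct.map S.val S.val).range :=
  ⟨⟨x, hx⟩ ⊗ₜ ⟨y, hy⟩, rfl⟩

section CenteredWords

variable {A : Type*} [Ring A] [Algebra ℂ A] {ι : Type*}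
  (τ : A →ₗ[ℂ] ℂ) (B : ι → Subalgebra ℂ A) (s : Set ι)

def IsCenteredWord (L : List (ι × A)) : Prop :=
  (∀ p ∈ L, p.1 ∈ s ∧ p.2 ∈ B p.1 ∧ τ p.2 = 0) ∧ L.IsChain (fun p q => p.1 ≠ q.1)

def centeredWordSpan : Submodule ℂ A :=
  Submodule.span ℂ {w | ∃ L, IsCenteredWord τ B s L ∧ (L.map Prod.snd).prod = w}

variable {τ B s}

theorem IsCenteredWord.prod_mem {L : List (ι × A)} (hL : IsCenteredWord τ B s L) :
    (L.map Prod.snd).prod ∈ centeredWordSpan τ B s :=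
  Submodule.subset_span ⟨L, hL, rfl⟩

theorem one_mem_centeredWordSpan : (1 : A) ∈ centeredWordSpan τ B s :=
  IsCenteredWord.prod_mem (L := []) ⟨by simp, .nil⟩

theorem FreeFamily.apply_prod_eq_zero (hfree : FreeFamily τ B) {L : List (ι × A)}
    (hL : IsCenteredWord τ B s L) (hne : L ≠ []) : τ (L.map Prod.snd).prod = 0 := by
  have h := hfree L.length (List.length_pos_iff.2 hne) (fun j => (L.get j).2)
    (fun j => (L.get j).1)
    (fun j => (hL.1 _ (L.get_mem j)).2.1) (fun j => (hL.1 _ (L.get_mem j)).2.2)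
    (fun j h => List.isChain_iff_getElem.1 hL.2 j h)
  rwa [← Function.comp_def Prod.snd, ← List.map_ofFn, List.ofFn_get] at h

theorem mul_prod_mem_centeredWordSpan_of_head_ne (hτ : τ 1 = 1) {k : ι} (hk : k ∈ s) {x : A}
    (hx : x ∈ B k) {L : List (ι × A)} (hL : IsCenteredWord τ B s L)
    (hhead : ∀ p ∈ L.head?, p.1 ≠ k) :
    x * (L.map Prod.snd).prod ∈ centeredWordSpan τ B s := by
  have hcons : IsCenteredWord τ B s ((k, x - τ x • 1) :: L) := by
    refine ⟨?_, List.isChain_cons.2 ⟨fun p hp => (hhead p hp).symm, hL.2⟩⟩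
    rintro p (_ | ⟨_, hp⟩)
    · exact ⟨hk, sub_mem hx (Subalgebra.smul_mem _ (one_mem _) _), by simp [hτ]⟩
    · exact hL.1 p hp
  have hsplit : x * (L.map Prod.snd).prod =
      (((k, x - τ x • 1) :: L).map Prod.snd).prod + τ x • (L.map Prod.snd).prod := by
    simp [sub_mul]
  rw [hsplit]
  exact add_mem hcons.prod_mem (Submodule.smul_mem _ _ hL.prod_mem)

theorem mul_prod_mem_centeredWordSpan (hτ : τ 1 = 1) {k : ι} (hk : k ∈ s) {x : A}
    (hx : x ∈ B k) {L : List (ι × A)} (hL : IsCenteredWord τ B s L) :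
    x * (L.map Prod.snd).prod ∈ centeredWordSpan τ B s := by
  match L, hL with
  | [], hL => exact mul_prod_mem_centeredWordSpan_of_head_ne hτ hk hx hL (by simp)
  | (j, y) :: L', hL =>
    by_cases hjk : j = k
    · subst hjk
      have hL' : IsCenteredWord τ B s L' :=
        ⟨fun p hp => hL.1 p (List.mem_cons_of_mem _ hp), hL.2.tail⟩
      rw [List.map_cons, List.prod_cons, ← mul_assoc]
      exact mul_prod_mem_centeredWordSpan_of_head_ne hτ hk
        (mul_mem hx (hL.1 _ List.mem_cons_self).2.1) hL'
        (fun p hp => (List.isChain_cons.1 hL.2).1 p hp |>.symm)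
    · exact mul_prod_mem_centeredWordSpan_of_head_ne hτ hk hx hL (by simpa using hjk)

theorem mul_mem_centeredWordSpan (hτ : τ 1 = 1) {k : ι} (hk : k ∈ s) {x w : A}
    (hx : x ∈ B k) (hw : w ∈ centeredWordSpan τ B s) : x * w ∈ centeredWordSpan τ B s := by
  induction hw using Submodule.span_induction with
  | mem w hw =>
    obtain ⟨L, hL, rfl⟩ := hw
    exact mul_prod_mem_centeredWordSpan hτ hk hx hL
  | zero => simp
  | add w w' _ _ h h' => simpa [mul_add] using add_mem h h'
  | smul r w _ h => simpa using Submodule.smul_mem _ r h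

theorem adjoin_le_centeredWordSpan (hτ : τ 1 = 1) :
    Subalgebra.toSubmodule (Algebra.adjoin ℂ (⋃ k ∈ s, (B k : Set A))) ≤
      centeredWordSpan τ B s := by
  suffices h : ∀ x ∈ Algebra.adjoin ℂ (⋃ k ∈ s, (B k : Set A)),
      ∀ w ∈ centeredWordSpan τ B s, x * w ∈ centeredWordSpan τ B s from
    fun x hx => by simpa using h x hx 1 one_mem_centeredWordSpan
  intro x hx
  induction hx using Algebra.adjoin_induction with
  | mem x hx =>
    obtain ⟨k, hk, hx⟩ := Set.mem_iUnion₂.1 hx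
    exact fun w hw => mul_mem_centeredWordSpan hτ hk hx hw
  | algebraMap r =>
    intro w hw
    simpa [Algebra.algebraMap_eq_smul_one] using Submodule.smul_mem _ r hw
  | add x y _ _ hx hy =>
    intro w hw
    simpa [add_mul] using add_mem (hx w hw) (hy w hw)
  | mul x y _ _ hx hy =>
    intro w hw
    simpa [mul_assoc] using hx _ (hy w hw)

theorem FreeFamily.apply_prod_mul_mul_prod_eq_zero (hfree : FreeFamily τ B) {t : ι} {b : A}
    (hb : b ∈ B t) (hb₀ : τ b = 0) {L L' : List (ι × A)} (hL : IsCenteredWord τ B {t}ᶜ L)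
    (hL' : IsCenteredWord τ B {t}ᶜ L') :
    τ ((L.map Prod.snd).prod * b * (L'.map Prod.snd).prod) = 0 := by
  have hword : IsCenteredWord τ B Set.univ (L ++ (t, b) :: L') := by
    refine ⟨?_, List.isChain_append.2 ⟨hL.2, List.isChain_cons.2 ⟨?_, hL'.2⟩, ?_⟩⟩
    · simp only [List.mem_append, List.mem_cons]
      rintro p (hp | rfl | hp)
      exacts [⟨trivial, (hL.1 p hp).2⟩, ⟨trivial, hb, hb₀⟩, ⟨trivial, (hL'.1 p hp).2⟩]
    · exact fun p hp => Ne.symm (hL'.1 p (List.mem_of_mem_head? hp)).1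
    · simp only [List.head?_cons, Option.mem_some_iff]
      rintro p hp _ rfl
      exact (hL.1 p (List.mem_of_mem_getLast? hp)).1
  simpa [mul_assoc] using hfree.apply_prod_eq_zero hword (by simp)

theorem FreeFamily.apply_mul_mul_eq_zero (hfree : FreeFamily τ B) {t : ι} {b : A}
    (hb : b ∈ B t) (hb₀ : τ b = 0) {x y : A} (hx : x ∈ centeredWordSpan τ B {t}ᶜ)
    (hy : y ∈ centeredWordSpan τ B {t}ᶜ) : τ (x * b * y) = 0 := by
  induction hx using Submodule.span_induction with
  | mem x hx =>
    obtain ⟨L, hL, rfl⟩ := hx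
    induction hy using Submodule.span_induction with
    | mem y hy =>
      obtain ⟨L', hL', rfl⟩ := hy
      exact hfree.apply_prod_mul_mul_prod_eq_zero hb hb₀ hL hL'
    | zero => simp
    | add y y' _ _ h h' => simp [mul_add, h, h']
    | smul r y _ h => simp [h]
  | zero => simp
  | add x x' _ _ h h' => simp [add_mul, h, h']
  | smul r x _ h => simp [h]

theorem FreeFamily.apply_mul_mul_eq (hfree : FreeFamily τ B) (hτ : τ 1 = 1) {t : ι} {b : A}
    (hb : b ∈ B t) {x y : A}
    (hx : x ∈ Algebra.adjoin ℂ (⋃ k ∈ ({t}ᶜ : Set ι), (B k : Set A)))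
    (hy : y ∈ Algebra.adjoin ℂ (⋃ k ∈ ({t}ᶜ : Set ι), (B k : Set A))) :
    τ (x * b * y) = τ b * τ (x * y) := by
  have hb₀ : τ (b - τ b • 1) = 0 := by simp [hτ]
  calc τ (x * b * y) = τ (x * (b - τ b • 1) * y) + τ b * τ (x * y) := by
        simp [mul_sub, sub_mul]
    _ = τ b * τ (x * y) := by
        rw [hfree.apply_mul_mul_eq_zero (sub_mem hb (Subalgebra.smul_mem _ (one_mem _) _)) hb₀
          (adjoin_le_centeredWordSpan hτ hx) (adjoin_le_centeredWordSpan hτ hy), zero_add]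

end CenteredWords

section TensorState

variable {A : Type*} [Ring A] [Algebra ℂ A] (τ : A →ₗ[ℂ] ℂ)

theorem tState_tmul (x y : A) : tState τ (x ⊗ₜ[ℂ] y) = τ x * τ y := by
  simp [tState]

variable {τ}

theorem tState_mul_tmul_mul {S : Subalgebra ℂ A} {a d : A}
    (ha : ∀ x ∈ S, ∀ y ∈ S, τ (x * a * y) = τ a * τ (x * y))
    (hd : ∀ x ∈ S, ∀ y ∈ S, τ (x * d * y) = τ d * τ (x * y)) {X Y : A ⊗[ℂ] A}
    (hX : X ∈ (Algebra.TensorProduct.map S.val S.val).range)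
    (hY : Y ∈ (Algebra.TensorProduct.map S.val S.val).range) :
    tState τ (X * (a ⊗ₜ[ℂ] d) * Y) = τ a * τ d * tState τ (X * Y) := by
  obtain ⟨z, rfl⟩ := (AlgHom.mem_range _).1 hX
  obtain ⟨z', rfl⟩ := (AlgHom.mem_range _).1 hY
  clear hX hY
  induction z using TensorProduct.induction_on with
  | zero => simp
  | add z₁ z₂ h₁ h₂ => simp only [map_add, add_mul, h₁, h₂, mul_add]
  | tmul x y =>
    induction z' using TensorProduct.induction_on with
    | zero => simp
    | add z₁ z₂ h₁ h₂ => simp only [map_add, mul_add, h₁, h₂]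
    | tmul x' y' =>
      simp only [Algebra.TensorProduct.map_tmul, Algebra.TensorProduct.tmul_mul_tmul,
        tState_tmul, Subalgebra.coe_val, ha x x.2 x' x'.2, hd y y.2 y' y'.2]
      ring

end TensorState

theorem centered_tensor_with_singleton_index_vanishes_general
    {A : Type*} [Ring A] [Algebra ℂ A] [StarRing A] (φ : NCState A)
    {n : ℕ} (a d : Fin n → A)
    (hfree : FreeFamily φ.τ (fun k => Algebra.adjoin ℂ ({a k, d k} : Set A)))
    (c : Fin n → A ⊗[ℂ] A)
    (hc : ∀ k, c k = a k ⊗ₜ[ℂ] d k - (φ.τ (a k) * φ.τ (d k)) • (1 : A ⊗[ℂ] A))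
    {m : ℕ} (i : Fin m → Fin n) (l : Fin m)
    (hl : ∀ j : Fin m, j ≠ l → i j ≠ i l) :
    tState φ.τ ((List.ofFn fun j => c (i j)).prod) = 0 := by
  set B : Fin n → Subalgebra ℂ A := fun k => Algebra.adjoin ℂ {a k, d k}
  set S := Algebra.adjoin ℂ (⋃ k ∈ ({i l}ᶜ : Set (Fin n)), (B k : Set A))
  have hS {j : Fin m} (hj : j ≠ l) {x : A} (hx : x ∈ ({a (i j), d (i j)} : Set A)) : x ∈ S :=
    Algebra.subset_adjoin (Set.mem_biUnion (hl j hj) (Algebra.subset_adjoin hx))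
  have hcT (j : Fin m) (hj : j ≠ l) :
      c (i j) ∈ (Algebra.TensorProduct.map S.val S.val).range := by
    rw [hc]
    exact sub_mem (Subalgebra.tmul_mem_range_map_val (hS hj (by simp)) (hS hj (by simp)))
      (Subalgebra.smul_mem _ (one_mem _) _)
  obtain ⟨X, hX, Y, hY, hprod⟩ := Submonoid.exists_prod_ofFn_eq_mul_mul
    (Algebra.TensorProduct.map S.val S.val).range.toSubmonoid _ l hcT
  have hfactor {b : A} (hb : b ∈ ({a (i l), d (i l)} : Set A)) (x : A) (hx : x ∈ S) (y : A)
      (hy : y ∈ S) : φ.τ (x * b * y) = φ.τ b * φ.τ (x * y) :=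
    hfree.apply_mul_mul_eq φ.map_one (Algebra.subset_adjoin hb) hx hy
  calc tState φ.τ ((List.ofFn fun j => c (i j)).prod)
      = tState φ.τ (X * (a (i l) ⊗ₜ[ℂ] d (i l)) * Y) -
          φ.τ (a (i l)) * φ.τ (d (i l)) * tState φ.τ (X * Y) := by
        rw [hprod, hc, mul_sub, sub_mul, mul_smul_comm, mul_one, smul_mul_assoc, map_sub,
          map_smul, smul_eq_mul]
    _ = 0 := by
        rw [tState_mul_tmul_mul (hfactor (by simp)) (hfactor (by simp)) hX hY, sub_self]

theorem centered_tensor_with_singleton_index_vanishes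
    {A : Type*} [Ring A] [Algebra ℂ A] [StarRing A] (φ : NCState A)
    {n : ℕ} (a d : Fin n → A)
    (hfree : FreeFamily φ.τ (fun k => Algebra.adjoin ℂ ({a k, d k} : Set A)))
    (c : Fin n → A ⊗[ℂ] A)
    (hc : ∀ k, c k = a k ⊗ₜ[ℂ] d k - (φ.τ (a k) * φ.τ (d k)) • (1 : A ⊗[ℂ] A))
    {m : ℕ} (hm : 0 < m) (i : Fin m → Fin n) (l : Fin m)
    (hl : ∀ j : Fin m, j ≠ l → i j ≠ i l) :
    tState φ.τ ((List.ofFn fun j => c (i j)).prod) = 0 :=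
  centered_tensor_with_singleton_index_vanishes_general φ a d hfree c hc i l hl
end
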